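/- arXiv:1603.01524 — 2 statements merged into one kernel-verified Lean document; each statement's English description precedes it below -/
import Mathlib

section
/- In a coordination game on locations embedded in ℝ where all type sets are single-peaked with known ideal points x^i (no ambiguity about the peak), any LEX equilibrium location set L with |L| ≥ 2 has exactly two elements {α, β} with α < x^i < β for every player i. In particular, L contains at most one location strictly below min_i x^i's peak and at most one strictly above, because among two locations on the same side of a peak, every single-peaked preference with that peak prefers the closer one. -/
open Finset

/-- `v : ℝ → ℝ` represents a strict preference over the finite location set
`S ⊆ ℝ` that is single-peaked with peak `p`: `p` is top-ranked, and among two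
locations on the same side of `p`, the closer one (in the order of `ℝ`) is
strictly preferred. -/
def SinglePeaked (v : ℝ → ℝ) (S : Finset ℝ) (p : ℝ) : Prop :=
  p ∈ S ∧ (∀ y ∈ S, y ≠ p → v y < v p) ∧
    (∀ y ∈ S, ∀ z ∈ S, ((p < y ∧ y < z) ∨ (z < y ∧ y < p)) → v z < v y)

/-- `l` is the most preferred location in `L` for the type represented by `v`. -/
def IsBestIn (v : ℝ → ℝ) (L : Finset ℝ) (l : ℝ) : Prop :=
  l ∈ L ∧ ∀ l' ∈ L, v l' ≤ v l

/-- In a coordination game on locations `S ⊆ ℝ` in which every type of player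
`i` is single-peaked with the known peak `x i` (no ambiguity about the peak),
any LEX equilibrium location set `L` (i.e. all best-location maps onto `L` are
surjective) with `|L| ≥ 2` consists of exactly two locations `α < β` with
`α < x i < β` for every player `i`. -/
theorem stmt16 {ι : Type*} [Nonempty ι] (S : Finset ℝ) (x : ι → ℝ)
    (T : ι → Finset (ℝ → ℝ))
    (hsp : ∀ i, ∀ v ∈ T i, SinglePeaked v S (x i))
    (L : Finset ℝ) (hLS : L ⊆ S)
    (honto : ∀ i, ∀ l ∈ L, ∃ v ∈ T i, IsBestIn v L l)
    (hcard : 2 ≤ L.card) :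
    ∃ α β : ℝ, α < β ∧ L = {α, β} ∧ ∀ i, α < x i ∧ x i < β := by
  have hne : L.Nonempty := Finset.card_pos.mp (by omega)
  have key : ∀ i, ∀ l ∈ L, ∀ y ∈ L, ¬ (x i ≤ y ∧ y < l) := by
    rintro i l hl y hy ⟨h1, h2⟩
    obtain ⟨v, hv, hbl, hbest⟩ := honto i l hl
    obtain ⟨hp, htop, hmono⟩ := hsp i v hv
    rcases h1.lt_or_eq with h | h
    · exact absurd (hbest y hy) (not_le.mpr (hmono y (hLS hy) l (hLS hl) (Or.inl ⟨h, h2⟩)))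
    · have : v l < v y := h ▸ htop l (hLS hl) (h ▸ h2).ne'
      exact absurd (hbest y hy) (not_le.mpr this)
  have key' : ∀ i, ∀ l ∈ L, ∀ y ∈ L, ¬ (l < y ∧ y ≤ x i) := by
    rintro i l hl y hy ⟨h1, h2⟩
    obtain ⟨v, hv, hbl, hbest⟩ := honto i l hl
    obtain ⟨hp, htop, hmono⟩ := hsp i v hv
    rcases h2.lt_or_eq with h | h
    · exact absurd (hbest y hy) (not_le.mpr (hmono y (hLS hy) l (hLS hl) (Or.inr ⟨h1, h⟩)))
    · have : v l < v y := h ▸ htop l (hLS hl) (h ▸ h1).ne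
      exact absurd (hbest y hy) (not_le.mpr this)
  refine ⟨L.min' hne, L.max' hne, L.min'_lt_max'_of_card (by omega), ?_, ?_⟩
  · have hαβ : L.min' hne < L.max' hne := L.min'_lt_max'_of_card (by omega)
    obtain ⟨i⟩ := ‹Nonempty ι›
    have hα : L.min' hne < x i := by
      by_contra h
      exact key i (L.max' hne) (L.max'_mem hne) (L.min' hne) (L.min'_mem hne)
        ⟨not_lt.mp h, hαβ⟩
    have hβ : x i < L.max' hne := by
      by_contra h
      exact key' i (L.min' hne) (L.min'_mem hne) (L.max' hne) (L.max'_mem hne)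
        ⟨hαβ, not_lt.mp h⟩
    apply Finset.Subset.antisymm
    · intro c hc
      simp only [Finset.mem_insert, Finset.mem_singleton]
      by_contra hcon
      push_neg at hcon
      have h1 : L.min' hne < c := (L.min'_le c hc).lt_of_ne (Ne.symm hcon.1)
      have h2 : c < L.max' hne := (L.le_max' c hc).lt_of_ne hcon.2
      have hxc : x i < c := by
        by_contra h
        exact key' i (L.min' hne) (L.min'_mem hne) c hc ⟨h1, not_lt.mp h⟩
      exact key i (L.max' hne) (L.max'_mem hne) c hc ⟨hxc.le, h2⟩
    · intro c hc
      simp only [Finset.mem_insert, Finset.mem_singleton] at hc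
      rcases hc with rfl | rfl
      · exact L.min'_mem hne
      · exact L.max'_mem hne
  · intro i
    have hαβ : L.min' hne < L.max' hne := L.min'_lt_max'_of_card (by omega)
    constructor
    · by_contra h
      exact key i (L.max' hne) (L.max'_mem hne) (L.min' hne) (L.min'_mem hne)
        ⟨not_lt.mp h, hαβ⟩
    · by_contra h
      exact key' i (L.min' hne) (L.min'_mem hne) (L.max' hne) (L.max'_mem hne)
        ⟨hαβ, not_lt.mp h⟩
end

section
/- In the two-ideal-point Euclidean coordination game, a location set L with |L| ≥ 2 is a LEX equilibrium set if and only if L = {α, β} for some α < β with the midpoint m = (α+β)/2 satisfying x^i < m < y^i for every player i, where {x^i < y^i} are player i's two possible ideal points. Consequently, a nontrivial LEX equilibrium exists if and only if ∩_i (x^i, y^i) contains a point that is realizable as a midpoint of two locations (e.g., on the continuum of locations, iff ∩_i (x^i, y^i) ≠ ∅). -/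
open Finset

/-- `l` is the most preferred location in `L` for a Euclidean type with ideal
point `z`: it is strictly closer to `z` than every other location of `L`. -/
def EucBest (z : ℝ) (L : Finset ℝ) (l : ℝ) : Prop :=
  l ∈ L ∧ ∀ l' ∈ L, l' ≠ l → |l - z| < |l' - z|

/-- `L` is a LEX equilibrium location set of the two-ideal-point Euclidean
coordination game: for every player `i` (whose two types are the Euclidean
preferences with ideal points `x i` and `y i`), the map from his two types to
their best location in `L` is onto `L`. -/
def EqSet {ι : Type*} (x y : ι → ℝ) (L : Finset ℝ) : Prop :=
  ∀ i, ∀ l ∈ L, ∃ z ∈ ({x i, y i} : Set ℝ), EucBest z L l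

lemma best_unique {z : ℝ} {L : Finset ℝ} {l l' : ℝ}
    (h : EucBest z L l) (h' : EucBest z L l') : l = l' := by
  by_contra hne
  have h1 := h.2 l' h'.1 (fun e => hne e.symm)
  have h2 := h'.2 l h.1 hne
  linarith

lemma half_lt {α β z : ℝ} (hab : α < β) (h : |α - z| < |β - z|) :
    z < (α + β) / 2 := by
  have h0 := mul_self_lt_mul_self (abs_nonneg (α - z)) h
  rw [abs_mul_abs_self, abs_mul_abs_self] at h0
  nlinarith

lemma lt_half {α β z : ℝ} (hab : α < β) (h : |β - z| < |α - z|) :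
    (α + β) / 2 < z := by
  have h0 := mul_self_lt_mul_self (abs_nonneg (β - z)) h
  rw [abs_mul_abs_self, abs_mul_abs_self] at h0
  nlinarith

/-- In the two-ideal-point Euclidean coordination game (player `i`'s possible
ideal points are `x i < y i`), a location set `L` with `|L| ≥ 2` is a LEX
equilibrium set iff `L = {α, β}` with `α < β` and the midpoint `(α+β)/2` lies
strictly between `x i` and `y i` for every player `i`; consequently (on the
continuum of locations) a nontrivial LEX equilibrium exists iff
`∩ i (x i, y i) ≠ ∅`. -/
theorem stmt18 {ι : Type*} [Nonempty ι] (x y : ι → ℝ) (hxy : ∀ i, x i < y i) :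
    (∀ L : Finset ℝ, 2 ≤ L.card →
      (EqSet x y L ↔ ∃ α β : ℝ, α < β ∧ L = {α, β} ∧
        ∀ i, x i < (α + β) / 2 ∧ (α + β) / 2 < y i)) ∧
    ((∃ L : Finset ℝ, 2 ≤ L.card ∧ EqSet x y L) ↔
      ∃ m : ℝ, ∀ i, x i < m ∧ m < y i) := by
  have back : ∀ α β : ℝ, α < β → (∀ i, x i < (α + β) / 2 ∧ (α + β) / 2 < y i) →
      EqSet x y ({α, β} : Finset ℝ) := by
    intro α β hab hm i l hl
    simp only [Finset.mem_insert, Finset.mem_singleton] at hl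
    rcases hl with rfl | rfl
    · refine ⟨x i, Or.inl rfl, by simp, fun l' hl' hne => ?_⟩
      simp only [Finset.mem_insert, Finset.mem_singleton] at hl'
      rcases hl' with rfl | rfl
      · exact absurd rfl hne
      · have h1 := (hm i).1
        rw [abs_of_pos (show (0:ℝ) < l' - x i by linarith), abs_lt]
        constructor <;> linarith
    · refine ⟨y i, Or.inr rfl, by simp, fun l' hl' hne => ?_⟩
      simp only [Finset.mem_insert, Finset.mem_singleton] at hl'
      rcases hl' with rfl | rfl
      · have h2 := (hm i).2
        rw [abs_of_neg (show l' - y i < (0:ℝ) by linarith), abs_lt]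
        constructor <;> linarith
      · exact absurd rfl hne
  have fwd : ∀ L : Finset ℝ, 2 ≤ L.card → EqSet x y L →
      ∃ α β : ℝ, α < β ∧ L = {α, β} ∧
        ∀ i, x i < (α + β) / 2 ∧ (α + β) / 2 < y i := by
    intro L hc h
    obtain ⟨i⟩ := ‹Nonempty ι›
    have hcard : L.card = 2 := by
      by_contra hnc
      have h3 : 3 ≤ L.card := by omega
      obtain ⟨t, hts, htc⟩ := Finset.exists_subset_card_eq h3
      obtain ⟨a, b, c, hab, hac, hbc, rfl⟩ := Finset.card_eq_three.mp htc
      have ha : a ∈ L := hts (by simp)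
      have hb : b ∈ L := hts (by simp)
      have hcc : c ∈ L := hts (by simp)
      obtain ⟨za, hza, ha'⟩ := h i a ha
      obtain ⟨zb, hzb, hb'⟩ := h i b hb
      obtain ⟨zc, hzc, hc'⟩ := h i c hcc
      have nab : za ≠ zb := fun e => hab (best_unique ha' (e ▸ hb'))
      have nac : za ≠ zc := fun e => hac (best_unique ha' (e ▸ hc'))
      have nbc : zb ≠ zc := fun e => hbc (best_unique hb' (e ▸ hc'))
      simp only [Set.mem_insert_iff, Set.mem_singleton_iff] at hza hzb hzc
      rcases hza with rfl | rfl <;> rcases hzb with rfl | rfl <;>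
        rcases hzc with rfl | rfl <;> simp_all
    obtain ⟨a, b, hne, hLeq⟩ := Finset.card_eq_two.mp hcard
    have key : ∀ α β : ℝ, α < β → L = {α, β} →
        ∀ j, x j < (α + β) / 2 ∧ (α + β) / 2 < y j := by
      intro α β hab hL j
      subst hL
      obtain ⟨z, hz, hbz⟩ := h j α (by simp)
      obtain ⟨z', hz', hbz'⟩ := h j β (by simp)
      have h1 : z < (α + β) / 2 :=
        half_lt hab (hbz.2 β (by simp) (ne_of_gt hab))
      have h2 : (α + β) / 2 < z' :=
        lt_half hab (hbz'.2 α (by simp) (ne_of_lt hab))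
      simp only [Set.mem_insert_iff, Set.mem_singleton_iff] at hz hz'
      have := hxy j
      rcases hz with rfl | rfl <;> rcases hz' with rfl | rfl <;>
        first
        | exact ⟨h1, h2⟩
        | (exfalso; linarith)
    rcases hne.lt_or_gt with hlt | hlt
    · exact ⟨a, b, hlt, hLeq, key a b hlt hLeq⟩
    · have hLeq' : L = {b, a} := by rw [hLeq, Finset.pair_comm]
      exact ⟨b, a, hlt, hLeq', key b a hlt hLeq'⟩
  constructor
  · intro L hc
    constructor
    · exact fwd L hc
    · rintro ⟨α, β, hab, rfl, hm⟩
      exact back α β hab hm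
  · constructor
    · rintro ⟨L, hc, hE⟩
      obtain ⟨α, β, hab, -, hm⟩ := fwd L hc hE
      exact ⟨(α + β) / 2, hm⟩
    · rintro ⟨m, hm⟩
      refine ⟨{m - 1, m + 1}, ?_, ?_⟩
      · rw [Finset.card_pair (by linarith)]
      · exact back (m - 1) (m + 1) (by linarith)
          (fun i => ⟨by linarith [(hm i).1], by linarith [(hm i).2]⟩)
end
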